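/- arXiv:math/0410426 — 6 statements merged into one kernel-verified Lean document; each statement's English description precedes it below -/
import Mathlib

section
/- Let (Y,T) be a minimal continuous flow, and let χ₁ and χ₂ be eigenvectors of (Y,T) corresponding to two distinct eigenvalues λ₁ ≠ λ₂. Then sup_{y ∈ Y} |χ₁(y) − χ₂(y)| > 1/4. -/
open Set

/-- A continuous flow: a jointly continuous action of `ℝ` on `Y` with `T 0 = id` and
`T (s + t) = T s ∘ T t`. -/
def IsFlow {Y : Type*} [TopologicalSpace Y] (T : ℝ → Y → Y) : Prop :=
  Continuous (fun p : Y × ℝ => T p.2 p.1) ∧ (∀ y, T 0 y = y) ∧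
    ∀ s t : ℝ, ∀ y, T (s + t) y = T s (T t y)

/-- A set is invariant under the flow if `T t '' M = M` for all `t`. -/
def FlowInvariant {Y : Type*} (T : ℝ → Y → Y) (M : Set Y) : Prop :=
  ∀ t : ℝ, T t '' M = M

/-- The flow is minimal if the only closed invariant subsets are `∅` and `univ`. -/
def IsMinimalFlow {Y : Type*} [TopologicalSpace Y] (T : ℝ → Y → Y) : Prop :=
  ∀ M : Set Y, IsClosed M → FlowInvariant T M → M = ∅ ∨ M = univ

/-- A self-map is minimal if the only closed subsets `M` with `g '' M = M` are `∅` and `univ`. -/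
def IsMinimalMap {Y : Type*} [TopologicalSpace Y] (g : Y → Y) : Prop :=
  ∀ M : Set Y, IsClosed M → g '' M = M → M = ∅ ∨ M = univ

/-- `χ : Y → ℂ` is a (unit-circle valued) eigenvector of the flow `T` with eigenvalue `l ∈ ℝ`
if it is continuous, of modulus one, and `χ (T t y) = e^{2πi l t} * χ y`. -/
def IsEigenvector {Y : Type*} [TopologicalSpace Y] (T : ℝ → Y → Y) (l : ℝ) (χ : Y → ℂ) : Prop :=
  Continuous χ ∧ (∀ y, ‖χ y‖ = 1) ∧
    ∀ (y : Y) (t : ℝ), χ (T t y) = Complex.exp (2 * Real.pi * Complex.I * l * t) * χ y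

/-- The set `Λ(Y, T)` of eigenvalues of a flow. -/
def Eigenvalues {Y : Type*} [TopologicalSpace Y] (T : ℝ → Y → Y) : Set ℝ :=
  {l : ℝ | ∃ χ : Y → ℂ, IsEigenvector T l χ}

/-!
Along an orbit the quotient `χ₁ / χ₂` is multiplied by `e^{2πi(λ₁ - λ₂)t}`, which runs through the
whole unit circle as `t` varies because `λ₁ ≠ λ₂`. Hence at some point of every orbit
`χ₁ = -χ₂`, where `|χ₁ - χ₂| = 2`, the largest value possible for two unimodular numbers;
so the supremum is in fact `2`.
-/

open Complex
open scoped Real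

theorem exists_exp_two_pi_mul_I_eq {c : ℝ} (hc : c ≠ 0) {z : ℂ} (hz : ‖z‖ = 1) :
    ∃ t : ℝ, exp (2 * π * I * c * t) = z := by
  refine ⟨z.arg / (2 * π * c), ?_⟩
  have hc' : (c : ℂ) ≠ 0 := ofReal_ne_zero.mpr hc
  have hexponent : 2 * π * I * c * ((z.arg / (2 * π * c) : ℝ) : ℂ) = z.arg * I := by
    push_cast
    field_simp
  rw [hexponent]
  simpa [hz] using norm_mul_exp_arg_mul_I z

namespace IsEigenvector

variable {Y : Type*} [TopologicalSpace Y] {T : ℝ → Y → Y} {l₁ l₂ : ℝ} {χ₁ χ₂ : Y → ℂ}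

theorem norm_sub_le_two (h₁ : IsEigenvector T l₁ χ₁) (h₂ : IsEigenvector T l₂ χ₂) (y : Y) :
    ‖χ₁ y - χ₂ y‖ ≤ 2 := by
  calc ‖χ₁ y - χ₂ y‖ ≤ ‖χ₁ y‖ + ‖χ₂ y‖ := norm_sub_le _ _
    _ = 2 := by rw [h₁.2.1, h₂.2.1]; norm_num

theorem exists_apply_eq_neg (h₁ : IsEigenvector T l₁ χ₁) (h₂ : IsEigenvector T l₂ χ₂)
    (hne : l₁ ≠ l₂) (y : Y) : ∃ t : ℝ, χ₁ (T t y) = -χ₂ (T t y) := by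
  have hχ₁ : χ₁ y ≠ 0 := norm_ne_zero_iff.mp (by simp [h₁.2.1 y])
  obtain ⟨t, ht⟩ := exists_exp_two_pi_mul_I_eq (sub_ne_zero.mpr hne)
    (z := -χ₂ y / χ₁ y) (by simp [h₁.2.1 y, h₂.2.1 y])
  refine ⟨t, ?_⟩
  have hsplit : exp (2 * π * I * l₁ * t) =
      exp (2 * π * I * ↑(l₁ - l₂) * t) * exp (2 * π * I * l₂ * t) := by
    rw [← exp_add]
    push_cast
    ring_nf
  rw [h₁.2.2, h₂.2.2, hsplit, ht]
  field_simp

theorem iSup_norm_sub_eq_two [Nonempty Y] (h₁ : IsEigenvector T l₁ χ₁)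
    (h₂ : IsEigenvector T l₂ χ₂) (hne : l₁ ≠ l₂) : ⨆ y, ‖χ₁ y - χ₂ y‖ = 2 := by
  refine le_antisymm (ciSup_le (h₁.norm_sub_le_two h₂)) ?_
  obtain ⟨y⟩ := ‹Nonempty Y›
  obtain ⟨t, ht⟩ := h₁.exists_apply_eq_neg h₂ hne y
  refine le_ciSup_of_le ⟨2, Set.forall_mem_range.mpr (h₁.norm_sub_le_two h₂)⟩ (T t y) ?_
  rw [ht, ← neg_add', norm_neg, ← two_mul, norm_mul, h₂.2.1]
  norm_num

end IsEigenvector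

theorem sup_dist_eigenvectors_gt_quarter_general {Y : Type*} [MetricSpace Y]
    [Nonempty Y] (T : ℝ → Y → Y)
    (l₁ l₂ : ℝ) (hne : l₁ ≠ l₂) (χ₁ χ₂ : Y → ℂ)
    (h₁ : IsEigenvector T l₁ χ₁) (h₂ : IsEigenvector T l₂ χ₂) :
    (⨆ y : Y, ‖χ₁ y - χ₂ y‖) > 1 / 4 := by
  rw [h₁.iSup_norm_sub_eq_two h₂ hne]
  norm_num

/-- If `χ₁` and `χ₂` are eigenvectors of a minimal continuous flow `(Y, T)` for
two distinct eigenvalues, then `sup_{y ∈ Y} |χ₁ y - χ₂ y| > 1/4`. -/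
theorem sup_dist_eigenvectors_gt_quarter {Y : Type*} [MetricSpace Y] [CompactSpace Y]
    [Nonempty Y] (T : ℝ → Y → Y) (hT : IsFlow T) (hmin : IsMinimalFlow T)
    (l₁ l₂ : ℝ) (hne : l₁ ≠ l₂) (χ₁ χ₂ : Y → ℂ)
    (h₁ : IsEigenvector T l₁ χ₁) (h₂ : IsEigenvector T l₂ χ₂) :
    (⨆ y : Y, ‖χ₁ y - χ₂ y‖) > 1 / 4 :=
  sup_dist_eigenvectors_gt_quarter_general T l₁ l₂ hne χ₁ χ₂ h₁ h₂
end

section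
/- Let (Y,T) be a continuous flow where the space Y is connected, and let t be a nonzero real number. Then the time-t map T^t is not minimal if and only if for every rational number r the time-(rt) map T^{rt} is not minimal. -/
/-!
If `T^t` is minimal then so is `T^{rt}` for every rational `r = p/q`: write `rt = p · (t/q)`.
Minimality passes from an iterate of a map to the map itself and from a bijection to its inverse,
so `T^{t/q}` is minimal. Passing from a minimal closed map `f` to its iterate `f^[q]` is where
connectedness enters. Take a minimal closed `f^[q]`-invariant set `A`; its images `f^[i] '' A`
cover `Y`, because their union is closed and `f`-invariant. If `f^[i] '' A` meets `A`, then
`A ⊆ f^[i] '' A` by minimality, and applying `f^[i]` `q` times gives `f^[i] '' A = A`. So `Aᶜ`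
is a finite union of closed sets, `A` is clopen, and `A = Y`.
-/

open Set

section Dynamics

variable {Y : Type*} [TopologicalSpace Y]

theorem Function.Periodic.iUnion_eq_biUnion_Iio {α : Type*} {φ : ℕ → Set α} {n : ℕ}
    (h : Function.Periodic φ n) (hn : n ≠ 0) : ⋃ i, φ i = ⋃ i ∈ Iio n, φ i := by
  ext x
  simp only [mem_iUnion, mem_Iio]
  refine ⟨fun ⟨i, hi⟩ => ⟨i % n, Nat.mod_lt i (Nat.pos_of_ne_zero hn), ?_⟩,
    fun ⟨i, _, hi⟩ => ⟨i, hi⟩⟩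
  rwa [h.map_mod_nat]

theorem IsClosedMap.iterate {f : Y → Y} (hf : IsClosedMap f) : ∀ n : ℕ, IsClosedMap f^[n]
  | 0 => IsClosedMap.id
  | n + 1 => (hf.iterate n).comp hf

theorem IsMinimalMap.of_iterate {f : Y → Y} {n : ℕ} (h : IsMinimalMap f^[n]) :
    IsMinimalMap f := by
  intro M hM hfM
  refine h M hM ?_
  rw [image_iterate_eq]
  exact Function.iterate_fixed hfM n

theorem IsMinimalMap.of_leftInverse {f g : Y → Y} (hfg : Function.LeftInverse f g)
    (hf : IsMinimalMap f) : IsMinimalMap g := by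
  intro M hM hgM
  refine hf M hM ?_
  nth_rw 1 [← hgM]
  rw [← image_comp, hfg.comp_eq_id, image_id]

def IsMinimalSet (g : Y → Y) (A : Set Y) : Prop :=
  Minimal (fun K : Set Y => K.Nonempty ∧ IsClosed K ∧ g '' K ⊆ K) A

theorem exists_isMinimalSet_subset [CompactSpace Y] {g : Y → Y} {M : Set Y} (hne : M.Nonempty)
    (hM : IsClosed M) (hgM : g '' M ⊆ M) : ∃ A ⊆ M, IsMinimalSet g A := by
  refine zorn_superset_nonempty _ (fun c hc hchain hcne => ?_) M ⟨hne, hM, hgM⟩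
  have hclosed : ∀ K ∈ c, IsClosed K := fun K hK => (hc hK).2.1
  refine ⟨⋂₀ c, ⟨?_, isClosed_sInter hclosed, ?_⟩, fun K hK => sInter_subset_of_mem hK⟩
  · have : Nonempty c := hcne.to_subtype
    have hdir : DirectedOn (· ⊇ ·) c := fun K hK L hL =>
      (hchain.total hK hL).elim (fun h => ⟨K, hK, subset_rfl, h⟩)
        fun h => ⟨L, hL, h, subset_rfl⟩
    exact IsCompact.nonempty_sInter_of_directed_nonempty_isCompact_isClosed hdir
      (fun K hK => (hc hK).1) (fun K hK => (hclosed K hK).isCompact) hclosed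
  · exact (image_sInter_subset c g).trans
      (subset_sInter fun K hK => (biInter_subset_of_mem hK).trans (hc hK).2.2)

namespace IsMinimalSet

variable {g : Y → Y} {A : Set Y}

theorem image_eq (hA : IsMinimalSet g A) (hg : IsClosedMap g) : g '' A = A :=
  hA.eq_of_subset ⟨hA.prop.1.image g, hg A hA.prop.2.1, image_mono hA.prop.2.2⟩ hA.prop.2.2

theorem subset_of_inter_nonempty (hA : IsMinimalSet g A) {K : Set Y} (hK : IsClosed K)
    (hgK : g '' K ⊆ K) (hAK : (A ∩ K).Nonempty) : A ⊆ K := by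
  have hinv : g '' (A ∩ K) ⊆ A ∩ K :=
    (image_inter_subset g A K).trans (inter_subset_inter hA.prop.2.2 hgK)
  rw [← hA.eq_of_subset ⟨hAK, hA.prop.2.1.inter hK, hinv⟩ inter_subset_left]
  exact inter_subset_right

end IsMinimalSet

section Iterate

variable {f : Y → Y} {A : Set Y} {n : ℕ}

omit [TopologicalSpace Y] in
theorem image_iterate_add (f : Y → Y) (i j : ℕ) (s : Set Y) :
    f^[i + j] '' s = f^[i] '' (f^[j] '' s) := by
  rw [Function.iterate_add, image_comp]

omit [TopologicalSpace Y] in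
theorem periodic_image_iterate (h : f^[n] '' A = A) :
    Function.Periodic (fun i => f^[i] '' A) n := fun i => by
  simp only [image_iterate_add, h]

theorem iUnion_Iio_image_iterate_eq_univ (hf : IsClosedMap f) (hmin : IsMinimalMap f)
    (hn : n ≠ 0) (hne : A.Nonempty) (hA : IsClosed A) (hgA : f^[n] '' A = A) :
    ⋃ i ∈ Iio n, f^[i] '' A = univ := by
  set φ : ℕ → Set Y := fun i => f^[i] '' A
  have hper : Function.Periodic φ n := periodic_image_iterate hgA
  have hφ_succ : ∀ i, f '' φ i = φ (i + 1) := fun i => by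
    simp only [φ, ← image_comp, ← Function.iterate_succ']
  have hφ_zero : φ 0 = φ ((n - 1) + 1) := by
    rw [Nat.sub_add_cancel (Nat.one_le_iff_ne_zero.mpr hn), ← hper 0, zero_add]
  have hinv : f '' ⋃ i, φ i = ⋃ i, φ i := by
    rw [image_iUnion, ← union_iUnion_nat_succ φ, union_eq_right.mpr (hφ_zero ▸
      subset_iUnion_of_subset (n - 1) subset_rfl)]
    simp only [hφ_succ]
  rw [← hper.iUnion_eq_biUnion_Iio hn]
  refine (hmin _ ?_ hinv).resolve_left ?_
  · rw [hper.iUnion_eq_biUnion_Iio hn]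
    exact (finite_Iio n).isClosed_biUnion fun i _ => hf.iterate i A hA
  · exact (hne.mono (subset_iUnion_of_subset 0 (image_id A).ge)).ne_empty

theorem IsMinimalSet.image_iterate_eq_of_inter_nonempty (hf : IsClosedMap f) (hn : n ≠ 0)
    (hA : IsMinimalSet f^[n] A) {i : ℕ} (hi : (A ∩ f^[i] '' A).Nonempty) :
    f^[i] '' A = A := by
  have hgA : f^[n] '' A = A := hA.image_eq (hf.iterate n)
  have hAφ : A ⊆ f^[i] '' A := hA.subset_of_inter_nonempty (hf.iterate i A hA.prop.2.1)
    (by rw [← image_iterate_add, add_comm, image_iterate_add, hgA]) hi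
  -- `A ⊆ f^[i] '' A` propagates to an increasing chain which returns to `A` after `n` steps
  have hmono : Monotone fun k => f^[i * k] '' A := monotone_nat_of_le_succ fun k => by
    rw [Nat.mul_succ, image_iterate_add]
    exact image_mono hAφ
  refine le_antisymm ?_ hAφ
  calc f^[i] '' A = f^[i * 1] '' A := by rw [mul_one]
    _ ⊆ f^[i * n] '' A := hmono (Nat.one_le_iff_ne_zero.mpr hn)
    _ = f^[0] '' A := by simpa using (periodic_image_iterate hgA).nat_mul i 0
    _ = A := image_id A

theorem IsMinimalMap.iterate [CompactSpace Y] [ConnectedSpace Y] (hf : IsClosedMap f)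
    (hmin : IsMinimalMap f) (hn : n ≠ 0) : IsMinimalMap f^[n] := by
  intro M hM hfM
  rcases M.eq_empty_or_nonempty with hM₀ | hne
  · exact Or.inl hM₀
  obtain ⟨A, hAM, hA⟩ := exists_isMinimalSet_subset hne hM hfM.subset
  suffices A = univ from Or.inr (eq_univ_of_univ_subset (this ▸ hAM))
  have hcover := iUnion_Iio_image_iterate_eq_univ hf hmin hn hA.prop.1 hA.prop.2.1
    (hA.image_eq (hf.iterate n))
  have hAc : Aᶜ = ⋃ i ∈ {i | i < n ∧ ¬(A ∩ f^[i] '' A).Nonempty}, f^[i] '' A := by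
    ext x
    rw [mem_compl_iff, mem_iUnion₂]
    constructor
    · intro hxA
      obtain ⟨i, hi, hxi⟩ := mem_iUnion₂.mp (hcover.ge (mem_univ x))
      refine ⟨i, ⟨hi, fun hAi => hxA ?_⟩, hxi⟩
      rwa [← hA.image_iterate_eq_of_inter_nonempty hf hn hAi]
    · rintro ⟨i, ⟨-, hAi⟩, hxi⟩ hxA
      exact hAi ⟨x, hxA, hxi⟩
  have hAopen : IsOpen A := by
    rw [← isClosed_compl_iff, hAc]
    exact ((finite_Iio n).subset fun i hi => hi.1).isClosed_biUnion
      fun i _ => hf.iterate i A hA.prop.2.1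
  exact IsClopen.eq_univ ⟨hA.prop.2.1, hAopen⟩ hA.prop.1

end Iterate

namespace IsFlow

variable {T : ℝ → Y → Y}

theorem continuous_apply (hT : IsFlow T) (s : ℝ) : Continuous (T s) :=
  hT.1.comp (continuous_id.prodMk continuous_const)

theorem leftInverse_neg (hT : IsFlow T) (s : ℝ) : Function.LeftInverse (T (-s)) (T s) :=
  fun y => by rw [← hT.2.2, neg_add_cancel, hT.2.1]

def toHomeomorph (hT : IsFlow T) (s : ℝ) : Y ≃ₜ Y where
  toFun := T s
  invFun := T (-s)
  left_inv := hT.leftInverse_neg s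
  right_inv y := by simpa using hT.leftInverse_neg (-s) y
  continuous_toFun := hT.continuous_apply s
  continuous_invFun := hT.continuous_apply (-s)

theorem iterate (hT : IsFlow T) (a : ℝ) (n : ℕ) : (T a)^[n] = T (n * a) := by
  induction n with
  | zero => exact funext fun y => by simp [hT.2.1]
  | succ n ih =>
    funext y
    rw [Function.iterate_succ_apply', ih, ← hT.2.2, Nat.cast_succ, add_one_mul, add_comm]

theorem isMinimalMap_of_int_mul (hT : IsFlow T) (a : ℝ) (p : ℤ)
    (h : IsMinimalMap (T (p * a))) : IsMinimalMap (T a) := by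
  refine IsMinimalMap.of_iterate (n := p.natAbs) ?_
  rw [hT.iterate]
  rcases Int.natAbs_eq p with hp | hp
  · rwa [hp, Int.cast_natCast] at h
  · rw [hp, Int.cast_neg, Int.cast_natCast, neg_mul] at h
    simpa using h.of_leftInverse (hT.leftInverse_neg _)

theorem isMinimalMap_nat_mul [CompactSpace Y] [ConnectedSpace Y] (hT : IsFlow T) {a : ℝ}
    (h : IsMinimalMap (T a)) {n : ℕ} (hn : n ≠ 0) : IsMinimalMap (T (n * a)) :=
  hT.iterate a n ▸ h.iterate (hT.toHomeomorph a).isClosedMap hn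

end IsFlow

end Dynamics

theorem not_minimal_iff_forall_rat_not_minimal_general {Y : Type*} [MetricSpace Y] [CompactSpace Y]
    [ConnectedSpace Y] (T : ℝ → Y → Y) (hT : IsFlow T) (t : ℝ) :
    ¬ IsMinimalMap (T t) ↔ ∀ r : ℚ, ¬ IsMinimalMap (T ((r : ℝ) * t)) := by
  refine ⟨fun h r hr => h ?_, fun h => by simpa using h 1⟩
  have hden : (r.den : ℝ) ≠ 0 := Nat.cast_ne_zero.mpr r.den_ne_zero
  have hnum : (r : ℝ) * t = r.num * (t / r.den) := by
    rw [Rat.cast_def]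
    ring
  have ht : t = r.den * (t / r.den) := by field_simp
  rw [hnum] at hr
  rw [ht]
  exact hT.isMinimalMap_nat_mul (hT.isMinimalMap_of_int_mul _ _ hr) r.den_ne_zero

/-- Let `(Y, T)` be a continuous flow with `Y` connected and let `t ≠ 0`. Then
the time-`t` map is not minimal iff for every rational `r` the time-`r*t` map is not minimal. -/
theorem not_minimal_iff_forall_rat_not_minimal {Y : Type*} [MetricSpace Y] [CompactSpace Y]
    [ConnectedSpace Y] (T : ℝ → Y → Y) (hT : IsFlow T) (t : ℝ) (ht : t ≠ 0) :
    ¬ IsMinimalMap (T t) ↔ ∀ r : ℚ, ¬ IsMinimalMap (T ((r : ℝ) * t)) :=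
  not_minimal_iff_forall_rat_not_minimal_general T hT t
end

section
/- Let (X,S) be a minimal dynamical system and let (Y,T) be the standard suspension of S. Then Λ(X,S) = φ(Λ(Y,T)), where φ : ℝ → S¹ is the canonical map φ(x) = e^{2πix}. That is, e^{2πiλ} is an eigenvalue of the dynamical system (X,S) if and only if there exists an eigenvalue λ' ∈ Λ(Y,T) of the flow with e^{2πiλ'} = e^{2πiλ}. -/
/-!
An eigenfunction `χ` of `S` with eigenvalue `e^{2πiλ}` extends to the suspension as
`[x, s] ↦ e^{2πiλs} χ x`, which is well defined because `χ (Sⁿ x) = e^{2πiλn} χ x`.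
Conversely, a flow eigenfunction restricted to the section `X × {0}` is an eigenfunction of `S`,
since `T¹ [x, 0] = [S x, 0]`. Every eigenvalue of `S` has modulus one, so it is of the form `e^{2πiλ}`.
-/

open Set

/-- The identification `(x, s) ∼ (Sⁿ x, s - n)` defining the standard suspension of `(X, S)`. -/
def SuspRel {X : Type*} (S : Equiv.Perm X) (p q : X × ℝ) : Prop :=
  ∃ n : ℤ, q.1 = (S ^ n) p.1 ∧ q.2 = p.2 - n

/-- The standard suspension space of `(X, S)`, with the quotient topology. -/
abbrev Susp {X : Type*} (S : Equiv.Perm X) : Type _ := Quot (SuspRel S)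

/-- The suspension flow: the time-`t` map `T^t [x, s] = [x, s + t]` on the standard
suspension of `(X, S)`. -/
def suspT {X : Type*} (S : Equiv.Perm X) (t : ℝ) : Susp S → Susp S :=
  Quot.map (fun p => (p.1, p.2 + t)) (by
    rintro ⟨x, s⟩ ⟨y, u⟩ ⟨n, h1, h2⟩
    exact ⟨n, h1, by dsimp at h2 ⊢; linarith⟩)

/-- The set `Λ(X, S)` of eigenvalues of a dynamical system `(X, S)`: unit complex numbers `c`
such that `χ ∘ S = c • χ` for some continuous unit-circle valued `χ : X → S¹`. -/
def DiscreteEigenvalues {X : Type*} [TopologicalSpace X] (S : X → X) : Set ℂ :=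
  {c : ℂ | ∃ χ : X → ℂ, Continuous χ ∧ (∀ x, ‖χ x‖ = 1) ∧ ∀ x, χ (S x) = c * χ x}

open Complex
open scoped Real

lemma apply_zpow_apply_eq_zpow_mul {X G₀ : Type*} [GroupWithZero G₀] {S : Equiv.Perm X}
    {χ : X → G₀} {c : G₀} (hc : c ≠ 0) (h : ∀ x, χ (S x) = c * χ x) (n : ℤ) (x : X) :
    χ ((S ^ n) x) = c ^ n * χ x := by
  have h_inv : ∀ x, χ (S⁻¹ x) = c⁻¹ * χ x := fun x => by
    rw [eq_inv_mul_iff_mul_eq₀ hc, ← h, ← Equiv.Perm.mul_apply, mul_inv_cancel, Equiv.Perm.one_apply]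
  induction n using Int.induction_on generalizing x with
  | zero => simp
  | succ k ih => rw [zpow_add_one, Equiv.Perm.mul_apply, ih, h, zpow_add_one₀ hc, mul_assoc]
  | pred k ih => rw [zpow_sub_one, Equiv.Perm.mul_apply, ih, h_inv, zpow_sub_one₀ hc, mul_assoc]

lemma norm_exp_two_pi_I_mul (x : ℝ) : ‖exp (2 * π * I * x)‖ = 1 := by
  rw [show 2 * π * I * x = ((2 * π * x : ℝ) : ℂ) * I by push_cast; ring]
  exact norm_exp_ofReal_mul_I _

lemma exists_exp_two_pi_I_mul_eq {c : ℂ} (hc : ‖c‖ = 1) : ∃ l : ℝ, exp (2 * π * I * l) = c := by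
  obtain ⟨θ, rfl⟩ := (norm_eq_one_iff c).1 hc
  refine ⟨θ / (2 * π), congrArg exp ?_⟩
  push_cast
  field_simp

lemma norm_eq_one_of_mem_discreteEigenvalues {X : Type*} [TopologicalSpace X] [Nonempty X]
    {S : X → X} {c : ℂ} (hc : c ∈ DiscreteEigenvalues S) : ‖c‖ = 1 := by
  obtain ⟨χ, -, hχ1, hχS⟩ := hc
  simpa [hχS, hχ1] using hχ1 (S (Classical.arbitrary X))

section Suspension

variable {X : Type*} (S : Equiv.Perm X)

lemma suspT_mk (t : ℝ) (p : X × ℝ) :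
    suspT S t (Quot.mk _ p) = Quot.mk (SuspRel S) (p.1, p.2 + t) :=
  rfl

lemma suspMk_apply_eq_suspT_one (x : X) (s : ℝ) :
    Quot.mk (SuspRel S) (S x, s) = suspT S 1 (Quot.mk _ (x, s)) :=
  Quot.sound ⟨-1, by simp, by simp⟩

variable [TopologicalSpace X]

lemma exp_mem_discreteEigenvalues_of_mem_eigenvalues {l : ℝ} (hl : l ∈ Eigenvalues (suspT S)) :
    exp (2 * π * I * l) ∈ DiscreteEigenvalues S := by
  obtain ⟨χ, hχ, hχ1, hχT⟩ := hl
  refine ⟨fun x => χ (Quot.mk _ (x, 0)), by fun_prop, fun x => hχ1 _, fun x => ?_⟩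
  simpa only [suspMk_apply_eq_suspT_one, ofReal_one, mul_one] using hχT _ 1

lemma mem_eigenvalues_of_exp_mem_discreteEigenvalues {l : ℝ}
    (hl : exp (2 * π * I * l) ∈ DiscreteEigenvalues S) : l ∈ Eigenvalues (suspT S) := by
  obtain ⟨χ, hχ, hχ1, hχS⟩ := hl
  let f : X × ℝ → ℂ := fun p => exp (2 * π * I * l * p.2) * χ p.1
  have hf : ∀ p q, SuspRel S p q → f p = f q := by
    rintro ⟨x, s⟩ ⟨_, _⟩ ⟨n, rfl, rfl⟩
    have hn := apply_zpow_apply_eq_zpow_mul (exp_ne_zero _) hχS n x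
    simp only [f, hn, ← exp_int_mul, ← mul_assoc, ← exp_add]
    push_cast
    ring_nf
  refine ⟨Quot.lift f hf, continuous_quot_lift hf (by fun_prop), ?_, ?_⟩
  · rintro ⟨x, s⟩
    simp only [f, norm_mul, hχ1, mul_one, mul_assoc _ (l : ℂ), ← ofReal_mul]
    exact norm_exp_two_pi_I_mul _
  · rintro ⟨x, s⟩ t
    simp only [suspT_mk, f, ← mul_assoc, ← exp_add]
    push_cast
    ring_nf

end Suspension

theorem discreteEigenvalues_eq_image_eigenvalues_general {X : Type*} [MetricSpace X]
    [Nonempty X] (S : Equiv.Perm X) :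
    DiscreteEigenvalues (⇑S)
      = (fun l : ℝ => Complex.exp (2 * Real.pi * Complex.I * l)) '' Eigenvalues (suspT S) := by
  ext c
  constructor
  · intro hc
    obtain ⟨l, rfl⟩ := exists_exp_two_pi_I_mul_eq (norm_eq_one_of_mem_discreteEigenvalues hc)
    exact ⟨l, mem_eigenvalues_of_exp_mem_discreteEigenvalues S hc, rfl⟩
  · rintro ⟨l, hl, rfl⟩
    exact exp_mem_discreteEigenvalues_of_mem_eigenvalues S hl

/-- For a minimal dynamical system `(X, S)` with standard suspension `(Y, T)`,
one has `Λ(X, S) = φ(Λ(Y, T))` where `φ(x) = e^{2πix}`. -/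
theorem discreteEigenvalues_eq_image_eigenvalues {X : Type*} [MetricSpace X] [CompactSpace X]
    [Nonempty X] (S : Equiv.Perm X) (hS : Continuous S) (hS' : Continuous S.symm)
    (hmin : IsMinimalMap (⇑S)) :
    DiscreteEigenvalues (⇑S)
      = (fun l : ℝ => Complex.exp (2 * Real.pi * Complex.I * l)) '' Eigenvalues (suspT S) :=
  discreteEigenvalues_eq_image_eigenvalues_general S
end

section
/- Let (X₁,S₁) be an almost one-to-one extension of (X₂,S₂). Then S₁ is minimal if and only if S₂ is minimal. -/
open Set

open Function

section

variable {X Y : Type*}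

def singletonFiberPoints (F : X → Y) : Set X :=
  {x | F ⁻¹' {F x} = {x}}

theorem singletonFiberPoints_subset_of_image_eq_univ {F : X → Y} {M : Set X}
    (hM : F '' M = univ) : singletonFiberPoints F ⊆ M := by
  intro x hx
  obtain ⟨m, hm, hmx⟩ : F x ∈ F '' M := hM ▸ mem_univ _
  have hm_fiber : m ∈ F ⁻¹' {F x} := hmx
  rw [hx, mem_singleton_iff] at hm_fiber
  exact hm_fiber ▸ hm

theorem Function.Semiconj.image_preimage_eq_of_image_eq {F : X → Y} {S₁ : Equiv.Perm X}
    {S₂ : Equiv.Perm Y} (hF : Semiconj F S₁ S₂) {M : Set Y} (hM : S₂ '' M = M) :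
    S₁ '' (F ⁻¹' M) = F ⁻¹' M := by
  have hF_symm : Semiconj F S₁.symm S₂.symm :=
    hF.inverses_right S₁.right_inv S₂.left_inv
  rw [Equiv.image_eq_preimage_symm, ← preimage_comp, hF_symm.comp_eq, preimage_comp,
    ← Equiv.image_eq_preimage_symm, hM]

variable [TopologicalSpace X] [TopologicalSpace Y]

theorem IsMinimalMap.of_semiconj {S₁ : Equiv.Perm X} {S₂ : Equiv.Perm Y} (h : IsMinimalMap S₁)
    {F : X → Y} (hFc : Continuous F) (hFs : Surjective F) (hF : Semiconj F S₁ S₂) :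
    IsMinimalMap S₂ := by
  intro M hM hSM
  exact (h _ (hM.preimage hFc) (hF.image_preimage_eq_of_image_eq hSM)).imp
    (fun h => hFs.preimage_injective (by rwa [preimage_empty]))
    (fun h => hFs.preimage_injective (by rwa [preimage_univ]))

/-- A nonempty closed invariant `M` has closed invariant image, hence `F '' M = univ`; then `M`
contains every singleton fibre, and these are dense. -/
theorem IsMinimalMap.of_semiconj_of_dense_singletonFiberPoints [CompactSpace X] [T2Space Y]
    {S₁ : X → X} {S₂ : Y → Y} (h : IsMinimalMap S₂) {F : X → Y} (hFc : Continuous F)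
    (hF : Semiconj F S₁ S₂) (hF11 : Dense (singletonFiberPoints F)) : IsMinimalMap S₁ := by
  intro M hM hSM
  rcases M.eq_empty_or_nonempty with hM_empty | hM_ne
  · exact .inl hM_empty
  have hFM_closed : IsClosed (F '' M) := (hM.isCompact.image hFc).isClosed
  have hFM_inv : S₂ '' (F '' M) = F '' M := by rw [← hF.set_image, hSM]
  have hFM_univ : F '' M = univ :=
    (h _ hFM_closed hFM_inv).resolve_left (hM_ne.image F).ne_empty
  refine .inr (eq_univ_of_univ_subset ?_)
  calc univ = closure (singletonFiberPoints F) := hF11.closure_eq.symm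
    _ ⊆ closure M := closure_mono (singletonFiberPoints_subset_of_image_eq_univ hFM_univ)
    _ = M := hM.closure_eq

end

theorem minimal_iff_of_almost_one_to_one_general {X₁ X₂ : Type*} [MetricSpace X₁] [CompactSpace X₁]
    [MetricSpace X₂]
    (S₁ : Equiv.Perm X₁)
    (S₂ : Equiv.Perm X₂)
    (F : X₁ → X₂) (hFc : Continuous F) (hFs : Function.Surjective F)
    (hFcomm : ∀ x, F (S₁ x) = S₂ (F x))
    (hF11 : Dense {x : X₁ | F ⁻¹' {F x} = {x}}) :
    IsMinimalMap (⇑S₁) ↔ IsMinimalMap (⇑S₂) :=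
  ⟨fun h => h.of_semiconj hFc hFs hFcomm,
    fun h => h.of_semiconj_of_dense_singletonFiberPoints hFc hFcomm hF11⟩

/-- If `(X₁, S₁)` is an almost one-to-one extension of `(X₂, S₂)`, then `S₁` is
minimal if and only if `S₂` is minimal. -/
theorem minimal_iff_of_almost_one_to_one {X₁ X₂ : Type*} [MetricSpace X₁] [CompactSpace X₁]
    [MetricSpace X₂] [CompactSpace X₂]
    (S₁ : Equiv.Perm X₁) (hS₁ : Continuous S₁) (hS₁' : Continuous S₁.symm)
    (S₂ : Equiv.Perm X₂) (hS₂ : Continuous S₂) (hS₂' : Continuous S₂.symm)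
    (F : X₁ → X₂) (hFc : Continuous F) (hFs : Function.Surjective F)
    (hFcomm : ∀ x, F (S₁ x) = S₂ (F x))
    (hF11 : Dense {x : X₁ | F ⁻¹' {F x} = {x}}) :
    IsMinimalMap (⇑S₁) ↔ IsMinimalMap (⇑S₂) :=
  minimal_iff_of_almost_one_to_one_general S₁ S₂ F hFc hFs hFcomm hF11
end

section
/- Let (X₁,S₁) be an almost one-to-one extension of (X₂,S₂) with almost one-to-one extension map F : X₁ → X₂, and let (Y₁,T₁) and (Y₂,T₂) be the standard suspensions of S₁ and S₂ respectively. For each t ∈ ℝ, the map F̃ : Y₁ → Y₂ defined by F̃([x,s]) = [F(x), s] is well defined, continuous and surjective, satisfies T₂^t ∘ F̃ = F̃ ∘ T₁^t, and the set {y ∈ Y₁ : F̃⁻¹(F̃(y)) = {y}} is dense in Y₁; that is, (Y₁, T₁^t) is an almost one-to-one extension of (Y₂, T₂^t). -/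
open Set

/-! Since `F` intertwines every power `S₁ⁿ` with `S₂ⁿ`, `F̃` is well defined. A point `x`
with `F ⁻¹' {F x} = {x}` gives singleton fibres `F̃ ⁻¹' {F̃ [x, s]} = {[x, s]}` for every `s`,
because `F̃ [y, u] = F̃ [x, s]` forces `F (S₁ⁿ y) = F x` for some `n ∈ ℤ`. Since the quotient
map `X₁ × ℝ → Y₁` is continuous and onto, it sends the dense set of such pairs `(x, s)` onto a
dense subset of `Y₁`. -/

open Function

theorem Function.Semiconj.perm_zpow {α β : Type*} {F : α → β} {σ : Equiv.Perm α}
    {τ : Equiv.Perm β} (h : Semiconj F σ τ) (n : ℤ) : Semiconj F ⇑(σ ^ n) ⇑(τ ^ n) := by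
  have hinv : Semiconj F ⇑σ⁻¹ ⇑τ⁻¹ := h.inverses_right σ.apply_symm_apply τ.symm_apply_apply
  induction n using Int.induction_on with
  | zero => exact Semiconj.id_right
  | succ k ih => rw [zpow_add_one, zpow_add_one]; exact ih.comp_right h
  | pred k ih => rw [zpow_sub_one, zpow_sub_one]; exact ih.comp_right hinv

theorem SuspRel.equivalence {X : Type*} (S : Equiv.Perm X) : Equivalence (SuspRel S) where
  refl _ := ⟨0, by simp⟩
  symm := by
    rintro ⟨x, s⟩ ⟨y, u⟩ ⟨n, rfl, rfl⟩
    exact ⟨-n, by simp, by push_cast; ring⟩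
  trans := by
    rintro ⟨x, s⟩ ⟨y, u⟩ ⟨z, v⟩ ⟨n, rfl, rfl⟩ ⟨m, rfl, rfl⟩
    exact ⟨m + n, by simp [zpow_add], by push_cast; ring⟩

namespace Susp

variable {X₁ X₂ : Type*} {S₁ : Equiv.Perm X₁} {S₂ : Equiv.Perm X₂} {F : X₁ → X₂}

theorem mk_eq_mk_iff {X : Type*} {S : Equiv.Perm X} {p q : X × ℝ} :
    Quot.mk (SuspRel S) p = Quot.mk (SuspRel S) q ↔ SuspRel S p q := by
  rw [Quot.eq, (SuspRel.equivalence S).eqvGen_iff]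

def map (hF : Semiconj F S₁ S₂) : Susp S₁ → Susp S₂ :=
  Quot.map (Prod.map F id) <| by
    rintro ⟨x, s⟩ ⟨y, u⟩ ⟨n, rfl, rfl⟩
    exact ⟨n, hF.perm_zpow n x, rfl⟩

theorem map_mk (hF : Semiconj F S₁ S₂) (p : X₁ × ℝ) :
    map hF (Quot.mk _ p) = Quot.mk (SuspRel S₂) (F p.1, p.2) :=
  rfl

theorem suspT_map (hF : Semiconj F S₁ S₂) (t : ℝ) (y : Susp S₁) :
    suspT S₂ t (map hF y) = map hF (suspT S₁ t y) := by
  induction y using Quot.ind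
  rfl

theorem map_surjective (hF : Semiconj F S₁ S₂) (hFs : Surjective F) : Surjective (map hF) := by
  rintro ⟨x, s⟩
  obtain ⟨x, rfl⟩ := hFs x
  exact ⟨Quot.mk _ (x, s), rfl⟩

theorem map_preimage_singleton_mk (hF : Semiconj F S₁ S₂) {x : X₁} (hx : F ⁻¹' {F x} = {x})
    (s : ℝ) : map hF ⁻¹' {map hF (Quot.mk _ (x, s))} = {Quot.mk _ (x, s)} := by
  refine Subset.antisymm ?_ (by simp)
  rintro ⟨y, u⟩ hyu
  obtain ⟨n, hn, rfl⟩ := mk_eq_mk_iff.1 hyu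
  have hSy : (S₁ ^ n) y = x := by
    rw [← mem_singleton_iff, ← hx, mem_preimage, hF.perm_zpow n y]
    exact hn.symm
  exact mk_eq_mk_iff.2 ⟨n, hSy.symm, rfl⟩

theorem continuous_map [TopologicalSpace X₁] [TopologicalSpace X₂] (hF : Semiconj F S₁ S₂)
    (hFc : Continuous F) : Continuous (map hF) :=
  continuous_quot_lift _ (continuous_quot_mk.comp (hFc.prodMap continuous_id))

theorem dense_preimage_singleton_map [TopologicalSpace X₁] (hF : Semiconj F S₁ S₂)
    (hdense : Dense {x : X₁ | F ⁻¹' {F x} = {x}}) :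
    Dense {y : Susp S₁ | map hF ⁻¹' {map hF y} = {y}} := by
  have himage : Dense (Quot.mk (SuspRel S₁) '' ({x | F ⁻¹' {F x} = {x}} ×ˢ univ)) :=
    Quot.mk_surjective.denseRange.dense_image continuous_quot_mk (hdense.prod dense_univ)
  refine himage.mono ?_
  rintro _ ⟨⟨x, s⟩, ⟨hx, -⟩, rfl⟩
  exact map_preimage_singleton_mk hF hx s

end Susp

theorem suspension_almost_one_to_one_general {X₁ X₂ : Type*} [MetricSpace X₁]
    [MetricSpace X₂]
    (S₁ : Equiv.Perm X₁)
    (S₂ : Equiv.Perm X₂)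
    (F : X₁ → X₂) (hFc : Continuous F) (hFs : Function.Surjective F)
    (hFcomm : ∀ x, F (S₁ x) = S₂ (F x))
    (hF11 : Dense {x : X₁ | F ⁻¹' {F x} = {x}}) (t : ℝ) :
    ∃ Ft : Susp S₁ → Susp S₂,
      (∀ p : X₁ × ℝ, Ft (Quot.mk (SuspRel S₁) p) = Quot.mk (SuspRel S₂) (F p.1, p.2)) ∧
      Continuous Ft ∧ Function.Surjective Ft ∧
      (∀ y : Susp S₁, suspT S₂ t (Ft y) = Ft (suspT S₁ t y)) ∧
      Dense {y : Susp S₁ | Ft ⁻¹' {Ft y} = {y}} :=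
  ⟨Susp.map hFcomm, Susp.map_mk hFcomm, Susp.continuous_map hFcomm hFc,
    Susp.map_surjective hFcomm hFs, Susp.suspT_map hFcomm t,
    Susp.dense_preimage_singleton_map hFcomm hF11⟩

/-- If `F` is an almost one-to-one extension map from `(X₁, S₁)` onto
`(X₂, S₂)`, then for each `t ∈ ℝ` the induced map `F̃ [x, s] = [F x, s]` between the standard
suspensions is well defined, continuous, surjective, intertwines the time-`t` maps, and is
almost one-to-one; that is, `(Y₁, T₁^t)` is an almost one-to-one extension of `(Y₂, T₂^t)`. -/
theorem suspension_almost_one_to_one {X₁ X₂ : Type*} [MetricSpace X₁] [CompactSpace X₁]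
    [MetricSpace X₂] [CompactSpace X₂]
    (S₁ : Equiv.Perm X₁) (hS₁ : Continuous S₁) (hS₁' : Continuous S₁.symm)
    (S₂ : Equiv.Perm X₂) (hS₂ : Continuous S₂) (hS₂' : Continuous S₂.symm)
    (F : X₁ → X₂) (hFc : Continuous F) (hFs : Function.Surjective F)
    (hFcomm : ∀ x, F (S₁ x) = S₂ (F x))
    (hF11 : Dense {x : X₁ | F ⁻¹' {F x} = {x}}) (t : ℝ) :
    ∃ Ft : Susp S₁ → Susp S₂,
      (∀ p : X₁ × ℝ, Ft (Quot.mk (SuspRel S₁) p) = Quot.mk (SuspRel S₂) (F p.1, p.2)) ∧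
      Continuous Ft ∧ Function.Surjective Ft ∧
      (∀ y : Susp S₁, suspT S₂ t (Ft y) = Ft (suspT S₁ t y)) ∧
      Dense {y : Susp S₁ | Ft ⁻¹' {Ft y} = {y}} :=
  suspension_almost_one_to_one_general S₁ S₂ F hFc hFs hFcomm hF11 t
end

section
/- Let (X₁,S₁) be an almost one-to-one extension of (X₂,S₂), and let (Y₁,T₁) and (Y₂,T₂) be the standard suspensions of S₁ and S₂ respectively. Then for each real number t, the time-t map T₁^t on (Y₁,T₁) is minimal if and only if the time-t map T₂^t on (Y₂,T₂) is minimal. -/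
open Set

/-!
Minimality passes from an extension to a factor along any continuous semiconjugacy, so the
content is the converse. The factor map `F` induces the factor map `[x, s] ↦ [F x, s]` of
suspensions, which is closed because `F × id` is proper, and whose fibre through `[x, s]` is a
singleton whenever `F⁻¹(F x) = {x}`; such points are dense. A nonempty closed invariant set `M`
upstairs has a closed invariant image, which by minimality downstairs is everything, so `M`
contains every point with a singleton fibre, and being closed it is everything.
-/

open Function

section Minimality

variable {Y₁ Y₂ : Type*} [TopologicalSpace Y₁] [TopologicalSpace Y₂]
  {g₁ : Y₁ → Y₁} {g₂ : Y₂ → Y₂} {φ : Y₁ → Y₂}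

theorem IsMinimalMap.of_semiconj_s15 (h : IsMinimalMap g₁) (hφ : Semiconj φ g₁ g₂)
    (hφc : Continuous φ) (hφs : Surjective φ) (hg₁ : Surjective g₁) (hg₂ : Injective g₂) :
    IsMinimalMap g₂ := by
  intro M hMc hMi
  have hinv : g₁ '' (φ ⁻¹' M) = φ ⁻¹' M := by
    refine Subset.antisymm ?_ fun y hy => ?_
    · rintro _ ⟨y, hy, rfl⟩
      rw [mem_preimage, hφ.eq, ← hMi]
      exact mem_image_of_mem g₂ hy
    · obtain ⟨y, rfl⟩ := hg₁ y
      rw [mem_preimage, hφ.eq, ← hMi, hg₂.mem_set_image] at hy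
      exact mem_image_of_mem g₁ hy
  rw [← image_preimage_eq M hφs]
  rcases h _ (hMc.preimage hφc) hinv with h | h
  · exact .inl (by rw [h, image_empty])
  · exact .inr (by rw [h, image_univ, hφs.range_eq])

theorem IsMinimalMap.of_semiconj_of_dense (h : IsMinimalMap g₂) (hφ : Semiconj φ g₁ g₂)
    (hφc : IsClosedMap φ) (hD : Dense {y | φ ⁻¹' {φ y} = {y}}) : IsMinimalMap g₁ := by
  intro M hMc hMi
  rcases M.eq_empty_or_nonempty with hM | hM
  · exact .inl hM
  have hinv : g₂ '' (φ '' M) = φ '' M := by rw [← hφ.set_image M, hMi]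
  rcases h _ (hφc M hMc) hinv with h | h
  · exact absurd (image_eq_empty.1 h) hM.ne_empty
  have hsub : {y | φ ⁻¹' {φ y} = {y}} ⊆ M := by
    intro y hy
    obtain ⟨m, hm, hmy⟩ : φ y ∈ φ '' M := h ▸ mem_univ _
    have hm_fibre : m ∈ φ ⁻¹' {φ y} := hmy
    rw [hy, mem_singleton_iff] at hm_fibre
    exact hm_fibre ▸ hm
  right
  rw [← hMc.closure_eq]
  exact (hD.mono hsub).closure_eq

end Minimality

theorem Function.Semiconj.perm_zpow_s15 {X₁ X₂ : Type*} {S₁ : Equiv.Perm X₁} {S₂ : Equiv.Perm X₂}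
    {F : X₁ → X₂} (h : Semiconj F S₁ S₂) (n : ℤ) : Semiconj F ⇑(S₁ ^ n) ⇑(S₂ ^ n) := by
  have hpow (k : ℕ) : Semiconj F ⇑(S₁ ^ k) ⇑(S₂ ^ k) := by
    simpa only [Equiv.Perm.coe_pow] using h.iterate_right k
  cases n with
  | ofNat k => simpa only [Int.ofNat_eq_natCast, zpow_natCast] using hpow k
  | negSucc k =>
    rw [zpow_negSucc, zpow_negSucc]
    exact (hpow (k + 1)).inverses_right (fun _ => by simp) (fun _ => by simp)

section Suspension

variable {X : Type*} (S : Equiv.Perm X)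

theorem equivalence_suspRel : Equivalence (SuspRel S) where
  refl _ := ⟨0, by simp, by simp⟩
  symm := fun ⟨n, h1, h2⟩ => ⟨-n, by simp [h1, zpow_neg], by simp [h2]⟩
  trans := fun ⟨n, h1, h2⟩ ⟨m, h3, h4⟩ =>
    ⟨m + n, by rw [h3, h1, zpow_add, Equiv.Perm.mul_apply], by push_cast; linarith⟩

theorem suspMk_eq_suspMk_iff {p q : X × ℝ} :
    Quot.mk (SuspRel S) p = Quot.mk (SuspRel S) q ↔ SuspRel S p q :=
  (equivalence_suspRel S).quot_mk_eq_iff p q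

theorem suspT_neg_suspT (t : ℝ) (y : Susp S) : suspT S (-t) (suspT S t y) = y := by
  obtain ⟨⟨x, s⟩, rfl⟩ := Quot.exists_rep y
  exact congrArg (Quot.mk _) (Prod.ext rfl (add_neg_cancel_right s t))

theorem bijective_suspT (t : ℝ) : Bijective (suspT S t) :=
  ⟨LeftInverse.injective (suspT_neg_suspT S t),
    RightInverse.surjective fun y => by simpa using suspT_neg_suspT S (-t) y⟩

end Suspension

section SuspMap

variable {X₁ X₂ : Type*} {S₁ : Equiv.Perm X₁} {S₂ : Equiv.Perm X₂} {F : X₁ → X₂}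
  (hF : Semiconj F S₁ S₂)

def suspMap : Susp S₁ → Susp S₂ :=
  Quot.map (Prod.map F id) fun p _ ⟨n, h1, h2⟩ => ⟨n, by simp [h1, (hF.perm_zpow_s15 n).eq], h2⟩

theorem semiconj_suspMap (t : ℝ) : Semiconj (suspMap hF) (suspT S₁ t) (suspT S₂ t) :=
  fun y => Quot.inductionOn y fun _ => rfl

theorem surjective_suspMap (hFs : Surjective F) : Surjective (suspMap hF) := by
  rintro ⟨x, s⟩
  obtain ⟨x, rfl⟩ := hFs x
  exact ⟨Quot.mk _ (x, s), rfl⟩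

theorem suspMk_preimage_suspMap_image (M : Set (Susp S₁)) :
    Quot.mk _ ⁻¹' (suspMap hF '' M) = Prod.map F id '' (Quot.mk _ ⁻¹' M) := by
  refine Subset.antisymm ?_ (image_subset_iff.2 fun _ hp => ⟨_, hp, rfl⟩)
  rintro q ⟨⟨p⟩, hp, hpq⟩
  obtain ⟨n, h1, h2⟩ := (suspMk_eq_suspMk_iff S₂).1 hpq
  refine ⟨((S₁ ^ n) p.1, q.2), ?_, Prod.ext ?_ rfl⟩
  · rwa [mem_preimage, ← (suspMk_eq_suspMk_iff S₁).2 ⟨n, rfl, h2⟩]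
  · simp [h1, (hF.perm_zpow_s15 n).eq]

theorem suspMap_preimage_singleton {x : X₁} (hx : F ⁻¹' {F x} = {x}) (s : ℝ) :
    suspMap hF ⁻¹' {suspMap hF (Quot.mk _ (x, s))} = {Quot.mk _ (x, s)} := by
  refine Subset.antisymm ?_ (by simp)
  rintro ⟨x', s'⟩ hy
  obtain ⟨n, h1, h2⟩ := (suspMk_eq_suspMk_iff S₂).1 hy
  have hx' : (S₁ ^ n) x' ∈ F ⁻¹' {F x} := by
    simpa [(hF.perm_zpow_s15 n).eq] using h1.symm
  rw [hx, mem_singleton_iff] at hx'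
  exact (suspMk_eq_suspMk_iff S₁).2 ⟨n, hx'.symm, h2⟩

variable [TopologicalSpace X₁]

theorem dense_suspMap_preimage_singleton (hD : Dense {x | F ⁻¹' {F x} = {x}}) :
    Dense {y | suspMap hF ⁻¹' {suspMap hF y} = {y}} := by
  refine (Quot.mk_surjective.denseRange.dense_image continuous_quot_mk
    (hD.prod dense_univ)).mono ?_
  rintro _ ⟨⟨x, s⟩, ⟨hx, -⟩, rfl⟩
  exact suspMap_preimage_singleton hF hx s

variable [TopologicalSpace X₂]

theorem continuous_suspMap (hFc : Continuous F) : Continuous (suspMap hF) :=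
  isQuotientMap_quot_mk.continuous_iff.2 (continuous_quot_mk.comp (hFc.prodMap continuous_id))

theorem isClosedMap_suspMap [CompactSpace X₁] [T2Space X₂] (hFc : Continuous F) :
    IsClosedMap (suspMap hF) := fun M hM => by
  rw [← isQuotientMap_quot_mk.isClosed_preimage, suspMk_preimage_suspMap_image]
  exact hFc.isProperMap.universally_closed ℝ _ (hM.preimage continuous_quot_mk)

end SuspMap

theorem time_map_minimal_iff_of_almost_one_to_one_general {X₁ X₂ : Type*}
    [MetricSpace X₁] [CompactSpace X₁] [MetricSpace X₂]
    (S₁ : Equiv.Perm X₁)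
    (S₂ : Equiv.Perm X₂)
    (F : X₁ → X₂) (hFc : Continuous F) (hFs : Function.Surjective F)
    (hFcomm : ∀ x, F (S₁ x) = S₂ (F x))
    (hF11 : Dense {x : X₁ | F ⁻¹' {F x} = {x}}) (t : ℝ) :
    IsMinimalMap (suspT S₁ t) ↔ IsMinimalMap (suspT S₂ t) :=
  ⟨fun h => h.of_semiconj_s15 (semiconj_suspMap hFcomm t) (continuous_suspMap hFcomm hFc)
      (surjective_suspMap hFcomm hFs) (bijective_suspT S₁ t).2 (bijective_suspT S₂ t).1,
    fun h => h.of_semiconj_of_dense (semiconj_suspMap hFcomm t) (isClosedMap_suspMap hFcomm hFc)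
      (dense_suspMap_preimage_singleton hFcomm hF11)⟩

/-- If `(X₁, S₁)` is an almost one-to-one extension of `(X₂, S₂)`, then for each
`t ∈ ℝ` the time-`t` map on the standard suspension of `S₁` is minimal iff the time-`t` map on
the standard suspension of `S₂` is minimal. -/
theorem time_map_minimal_iff_of_almost_one_to_one {X₁ X₂ : Type*}
    [MetricSpace X₁] [CompactSpace X₁] [MetricSpace X₂] [CompactSpace X₂]
    (S₁ : Equiv.Perm X₁) (hS₁ : Continuous S₁) (hS₁' : Continuous S₁.symm)
    (S₂ : Equiv.Perm X₂) (hS₂ : Continuous S₂) (hS₂' : Continuous S₂.symm)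
    (F : X₁ → X₂) (hFc : Continuous F) (hFs : Function.Surjective F)
    (hFcomm : ∀ x, F (S₁ x) = S₂ (F x))
    (hF11 : Dense {x : X₁ | F ⁻¹' {F x} = {x}}) (t : ℝ) :
    IsMinimalMap (suspT S₁ t) ↔ IsMinimalMap (suspT S₂ t) :=
  time_map_minimal_iff_of_almost_one_to_one_general S₁ S₂ F hFc hFs hFcomm hF11 t
end
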